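/- Let S be a 2-orthogonal collection in 𝒞. Then every morphism α: a^0 → a^1 in the extension closure ⟨S⟩ can be factorised as a^0 →^{σ} a →^{ι} a^1 with a ∈ ⟨S⟩, where σ is a deflation (there exists a short triangle x → a^0 →^{σ} a with x ∈ ⟨S⟩) and ι is a categorical monomorphism in ⟨S⟩ (𝒞(b, ι) is injective for every b ∈ ⟨S⟩). -/

import Mathlib

/-!
Common setup: `k` is a field, `C` an essentially small `k`-linear Hom-finite
triangulated category with split idempotents; `Σ` (suspension) is the shift by `1`.
-/

open CategoryTheory CategoryTheory.Limits CategoryTheory.Pretriangulated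

universe v u

variable {C : Type u} [Category.{v} C] [Preadditive C] [HasZeroObject C]
  [HasShift C ℤ] [∀ n : ℤ, (shiftFunctor C n).Additive] [Pretriangulated C]
  [HasBinaryBiproducts C]

/-- `c' ⟶ c ⟶ c''` is a *short triangle* if it fits into a distinguished triangle
`c' ⟶ c ⟶ c'' ⟶ Σ c'`. -/
def ShortTri {a b c : C} (f : a ⟶ b) (g : b ⟶ c) : Prop :=
  ∃ h : c ⟶ a⟦(1 : ℤ)⟧, Triangle.mk f g h ∈ distTriang C

/-- The extension closure `⟨S⟩` of a set of objects `S`: the smallest full subcategory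
(i.e. predicate on objects) containing `S` and closed under isomorphisms, finite direct
sums and extensions. -/
inductive ExtClos (S : Set C) : C → Prop
  | of {s : C} (hs : s ∈ S) : ExtClos S s
  | zero {z : C} (hz : IsZero z) : ExtClos S z
  | sum {x y : C} (hx : ExtClos S x) (hy : ExtClos S y) : ExtClos S (x ⊞ y)
  | iso {x y : C} (e : x ≅ y) (hx : ExtClos S x) : ExtClos S y
  | ext {a e b : C} (f : a ⟶ e) (g : e ⟶ b) (hT : ShortTri f g)
      (ha : ExtClos S a) (hb : ExtClos S b) : ExtClos S e

/-- A *`w`-orthogonal collection*: a finite set `S` of objects such that each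
`End(s)` is a skew field, `Hom(s,t) = 0` for distinct `s t ∈ S`, and
`Hom(s, Σ^ℓ t) = 0` for `ℓ ∈ {-w+1, …, -1}`. -/
structure IsOrthogonalCollection (w : ℤ) (S : Set C) : Prop where
  finite : S.Finite
  id_ne_zero : ∀ s ∈ S, (𝟙 s : s ⟶ s) ≠ 0
  isIso_of_ne_zero : ∀ s ∈ S, ∀ f : s ⟶ s, f ≠ 0 → IsIso f
  hom_eq_zero : ∀ s ∈ S, ∀ t ∈ S, s ≠ t → ∀ f : s ⟶ t, f = 0
  shift_hom_eq_zero : ∀ s ∈ S, ∀ t ∈ S, ∀ ℓ : ℤ, 1 - w ≤ ℓ → ℓ ≤ -1 → ∀ f : s ⟶ t⟦ℓ⟧, f = 0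

/-- `(f, g)` is a kernel–cokernel pair: `f` is a kernel of `g` and `g` is a cokernel
of `f`.  In an abelian category these are exactly the short exact sequences. -/
def IsKernelCokernelPair {A : Type*} [Category A] [Limits.HasZeroMorphisms A]
    {x y z : A} (f : x ⟶ y) (g : y ⟶ z) : Prop :=
  ∃ w : f ≫ g = 0, Nonempty (IsLimit (KernelFork.ofι f w)) ∧
    Nonempty (IsColimit (CokernelCofork.ofπ g w))

/-- An additive subcategory (as a predicate on objects): closed under isomorphisms,
finite direct sums and direct summands. -/
structure IsAdditiveSubcat (P : C → Prop) : Prop where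
  iso_closed : ∀ {x y : C}, (x ≅ y) → P x → P y
  sum_closed : ∀ {x y : C}, P x → P y → P (x ⊞ y)
  summand_closed : ∀ {x y : C}, P (x ⊞ y) → P x ∧ P y

/-- `P` is a *proper abelian subcategory* of `C`: an additive subcategory which is
abelian and whose short exact sequences (= kernel–cokernel pairs) are precisely the
short triangles of `C` with all terms in `P`. -/
structure IsProperAbelianSub (P : C → Prop) : Prop where
  additive : IsAdditiveSubcat P
  abelian : Nonempty (Abelian (ObjectProperty.FullSubcategory P))
  ses_iff_shortTri : ∀ (x y z : ObjectProperty.FullSubcategory P) (f : x ⟶ y) (g : y ⟶ z),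
    IsKernelCokernelPair f g ↔ ShortTri f.hom g.hom

/-- Finite length object in a category with zero morphisms: built from the zero object
by finitely many short exact sequences (kernel–cokernel pairs) with simple top. -/
inductive IsFinLength {A : Type*} [Category A] [Limits.HasZeroMorphisms A] : A → Prop
  | of_isZero {x : A} (h : IsZero x) : IsFinLength x
  | step {a x s : A} (f : a ⟶ x) (g : x ⟶ s) (hs : Simple s)
      (hkc : IsKernelCokernelPair f g) (ha : IsFinLength a) : IsFinLength x

/-- An `X`-preenvelope of `c`. -/
def IsPreenvelope (X : C → Prop) {c e : C} (γ : c ⟶ e) : Prop :=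
  X e ∧ ∀ e' : C, X e' → ∀ f : c ⟶ e', ∃ φ : e ⟶ e', γ ≫ φ = f

/-- An `X`-envelope of `c`: a left minimal `X`-preenvelope. -/
def IsEnvelope (X : C → Prop) {c e : C} (γ : c ⟶ e) : Prop :=
  IsPreenvelope X γ ∧ ∀ φ : e ⟶ e, γ ≫ φ = γ → IsIso φ

/-- An `X`-precover of `c`. -/
def IsPrecover (X : C → Prop) {x c : C} (τ : x ⟶ c) : Prop :=
  X x ∧ ∀ x' : C, X x' → ∀ f : x' ⟶ c, ∃ φ : x' ⟶ x, φ ≫ τ = f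

/-- An `X`-cover of `c`: a right minimal `X`-precover. -/
def IsCover (X : C → Prop) {x c : C} (τ : x ⟶ c) : Prop :=
  IsPrecover X τ ∧ ∀ φ : x ⟶ x, φ ≫ τ = τ → IsIso φ

/-- `Σ^n P`: the closure under isomorphism of the image of `P` under the `n`-th shift. -/
def ShiftClos (n : ℤ) (P : C → Prop) : C → Prop :=
  fun y => ∃ x : C, P x ∧ Nonempty (y ≅ x⟦n⟧)

/-- The star product `P * Q` of two classes of objects. -/
def StarProd (P Q : C → Prop) : C → Prop :=
  fun e => ∃ (a b : C) (f : a ⟶ e) (g : e ⟶ b), P a ∧ Q b ∧ ShortTri f g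

/-- `SpanFiltration S n = ⟨S⟩ * Σ^{-1}⟨S⟩ * ⋯ * Σ^{-n}⟨S⟩`. -/
def SpanFiltration (S : Set C) : ℕ → C → Prop
  | 0 => ExtClos S
  | n + 1 => StarProd (SpanFiltration S n) (ShiftClos (-(n + 1 : ℤ)) (ExtClos S))

/-- A *`w`-simple minded system*: a `w`-orthogonal collection `S` with
`C = ⟨S⟩ * Σ^{-1}⟨S⟩ * ⋯ * Σ^{-w+1}⟨S⟩`. -/
def IsSimpleMindedSystem (w : ℕ) (S : Set C) : Prop :=
  IsOrthogonalCollection (w : ℤ) S ∧ ∀ c : C, SpanFiltration S (w - 1) c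

/-- A torsion pair `(T, F)` in the (proper abelian) subcategory given by `P`;
short exact sequences in `P` are the short triangles with all terms in `P`. -/
structure IsTorsionPair (P T F : C → Prop) : Prop where
  t_sub : ∀ x, T x → P x
  f_sub : ∀ x, F x → P x
  t_iso : ∀ {x y : C}, (x ≅ y) → T x → T y
  f_iso : ∀ {x y : C}, (x ≅ y) → F x → F y
  hom_zero : ∀ t f, T t → F f → ∀ φ : t ⟶ f, φ = 0
  exists_seq : ∀ a, P a → ∃ (t f : C) (i : t ⟶ a) (p : a ⟶ f), T t ∧ F f ∧ ShortTri i p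

/-- `T` is closed under subobjects in the subcategory given by `P`. -/
def ClosedUnderSubobjects (P T : C → Prop) : Prop :=
  ∀ (x y : ObjectProperty.FullSubcategory P) (f : x ⟶ y), Mono f → T y.obj → T x.obj

/-- `T` is closed under quotient objects in the subcategory given by `P`. -/
def ClosedUnderQuotients (P T : C → Prop) : Prop :=
  ∀ (x y : ObjectProperty.FullSubcategory P) (f : x ⟶ y), Epi f → T x.obj → T y.obj

/-- `t` is a left tilt of `s` at `S'`: `t = Σ^{-1} s` for `s ∈ S'`, and otherwise `t` is
the cone of a `(Σ^{-1}⟨S'⟩)`-cover `τ : Σ^{-1}t_s ⟶ s`. -/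
def LeftTiltPair (S' : Set C) (s t : C) : Prop :=
  (s ∈ S' ∧ t = s⟦(-1 : ℤ)⟧) ∨
  (s ∉ S' ∧ ∃ (u : C) (τ : u ⟶ s) (g : s ⟶ t) (h : t ⟶ u⟦(1 : ℤ)⟧),
      IsCover (ShiftClos (-1) (ExtClos S')) τ ∧ Triangle.mk τ g h ∈ distTriang C)

/-- `L` realises the left tilt `L_{S'}(S)` of `S` at `S' ⊆ S`. -/
def IsLeftTilt (S' S : Set C) (L : C → C) : Prop := ∀ s ∈ S, LeftTiltPair S' s (L s)

/-- `t` is a right tilt of `s` at `S''`: `t = Σ s` for `s ∈ S''`, and otherwise there is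
a distinguished triangle `g_s ⟶ t ⟶ s ⟶ Σ g_s` whose third map is a `(Σ⟨S''⟩)`-envelope. -/
def RightTiltPair (S'' : Set C) (s t : C) : Prop :=
  (s ∈ S'' ∧ t = s⟦(1 : ℤ)⟧) ∨
  (s ∉ S'' ∧ ∃ (g : C) (a : g ⟶ t) (b : t ⟶ s) (γ : s ⟶ g⟦(1 : ℤ)⟧),
      IsEnvelope (ShiftClos 1 (ExtClos S'')) γ ∧ Triangle.mk a b γ ∈ distTriang C)

/-- `R` realises the right tilt `R_{S''}(S)` of `S` at `S'' ⊆ S`. -/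
def IsRightTilt (S'' S : Set C) (R : C → C) : Prop := ∀ s ∈ S, RightTiltPair S'' s (R s)

/-- `C` is `(-w)`-Calabi--Yau: `Σ^{-w}` is a Serre functor, i.e. there are isomorphisms
`C(x, Σ^{-w} y) ≅ D C(y, x)` natural in `x` and `y`. -/
def IsNegativeCalabiYau (k : Type) [Field k] (C : Type u) [Category.{v} C] [Preadditive C]
    [Linear k C] [HasShift C ℤ] (w : ℤ) : Prop :=
  ∃ η : ∀ x y : C, (x ⟶ y⟦(-w : ℤ)⟧) ≃ₗ[k] ((y ⟶ x) →ₗ[k] k),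
    (∀ (x x' y : C) (f : x ⟶ x') (α : x' ⟶ y⟦(-w : ℤ)⟧) (g : y ⟶ x),
      η x y (f ≫ α) g = η x' y α (g ≫ f)) ∧
    (∀ (x y y' : C) (u : y ⟶ y') (α : x ⟶ y⟦(-w : ℤ)⟧) (g : y' ⟶ x),
      η x y' (α ≫ (shiftFunctor C (-w : ℤ)).map u) g = η x y α (u ≫ g))


/-!
Write `⟨S⟩` for the extension closure. From `Hom(s, Σ⁻¹t) = 0` for `s, t ∈ S` one gets
`Hom(x, Σ⁻¹y) = 0` for all `x, y ∈ ⟨S⟩`, and this vanishing is what replaces the octahedral axiom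
(only the pretriangulated structure is available): if the fibres (or cones) of two composable
maps are known, an extension of them with the right connecting map is the fibre (or cone) of the
composite, because the comparison map given by the axioms is forced to be invertible.

The factorisation of `α : a⁰ ⟶ a¹` is built by induction on `a¹ ∈ ⟨S⟩`. For `a¹ = s ∈ S` a
nonzero `α` is itself a deflation: by induction on `a⁰`, and since `End(s)` is a skew field, its
fibre lies in `⟨S⟩`. For an extension `b' ⟶ a¹ ⟶ b''`, factor the composite `a⁰ ⟶ b''`, lift
the restriction of `α` to the fibre of that deflation along `b' ⟶ a¹` and factor the lift; the
extension `a` of the image in `b''` by the image in `b'` is the cone of the composite of the two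
deflations, and the induced `a ⟶ a¹` is a monomorphism on `⟨S⟩` because both pieces are.
-/

open ZeroObject Category

lemma eq_id_of_comp_self_of_sub_id_sq_eq_zero {D : Type*} [Category D] [Preadditive D] {X : D}
    {ε : X ⟶ X} (hε : ε ≫ ε = ε) (h : (ε - 𝟙 X) ≫ (ε - 𝟙 X) = 0) : ε = 𝟙 X := by
  have : (ε - 𝟙 X) ≫ (ε - 𝟙 X) = -(ε - 𝟙 X) := by
    simp only [Preadditive.sub_comp, Preadditive.comp_sub, comp_id, id_comp, hε]
    abel
  rwa [h, eq_comm, neg_eq_zero, sub_eq_zero] at this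

abbrev IsMonoOn {D : Type*} [Category D] [Preadditive D] (P : D → Prop) {a c : D} (ι : a ⟶ c) :
    Prop :=
  ∀ b, P b → ∀ u : b ⟶ a, u ≫ ι = 0 → u = 0

section Pretriangulated

variable {D : Type*} [Category D] [HasShift D ℤ]

lemma subsingleton_shift_hom_iff (x y : D) :
    Subsingleton (x⟦(1 : ℤ)⟧ ⟶ y) ↔ Subsingleton (x ⟶ y⟦(-1 : ℤ)⟧) :=
  ((shiftEquiv D (1 : ℤ)).toAdjunction.homEquiv x y).subsingleton_congr

variable [Preadditive D]

noncomputable def invRotateMor₁ {X Z : D} (h : Z ⟶ X⟦(1 : ℤ)⟧) : Z⟦(-1 : ℤ)⟧ ⟶ X :=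
  -h⟦(-1 : ℤ)⟧' ≫ (shiftEquiv D (1 : ℤ)).unitIso.inv.app X

lemma invRotateMor₁_comp {X X' Z : D} (h : Z ⟶ X⟦(1 : ℤ)⟧) (a : X ⟶ X') :
    invRotateMor₁ h ≫ a = invRotateMor₁ (h ≫ a⟦(1 : ℤ)⟧') := by
  simp only [invRotateMor₁, Preadditive.neg_comp, Functor.map_comp, neg_inj]
  exact ((assoc _ _ _).trans (congrArg (_ ≫ ·)
    ((shiftEquiv D (1 : ℤ)).unitIso.inv.naturality a).symm)).trans (assoc _ _ _).symm

variable [HasZeroObject D] [∀ n : ℤ, (shiftFunctor D n).Additive] [Pretriangulated D]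

variable {X Y Z W : D} {f : X ⟶ Y} {g : Y ⟶ Z} {h : Z ⟶ X⟦(1 : ℤ)⟧}

-- Library facts restated for `Triangle.mk f g h`, with all objects written as `X`, `Y`, `Z`:
-- `(Triangle.mk f g h).obj₁` is not reducibly `X`, which defeats rewriting with the originals.

lemma comp_eq_zero₁₂_mk (hT : Triangle.mk f g h ∈ distTriang D) : f ≫ g = 0 :=
  comp_distTriang_mor_zero₁₂ _ hT

lemma comp_eq_zero₂₃_mk (hT : Triangle.mk f g h ∈ distTriang D) : g ≫ h = 0 :=
  comp_distTriang_mor_zero₂₃ _ hT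

lemma comp_eq_zero₃₁_mk (hT : Triangle.mk f g h ∈ distTriang D) : h ≫ f⟦(1 : ℤ)⟧' = 0 :=
  comp_distTriang_mor_zero₃₁ _ hT

lemma inv_rot_of_distTriang_mk (hT : Triangle.mk f g h ∈ distTriang D) :
    Triangle.mk (invRotateMor₁ h) f (g ≫ (shiftEquiv D (1 : ℤ)).counitIso.inv.app Z) ∈
      distTriang D :=
  inv_rot_of_distTriang _ hT

lemma rot_of_distTriang_mk (hT : Triangle.mk f g h ∈ distTriang D) :
    Triangle.mk g h (-f⟦(1 : ℤ)⟧') ∈ distTriang D :=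
  rot_of_distTriang _ hT

lemma coyoneda_exact₂_mk (hT : Triangle.mk f g h ∈ distTriang D) {φ : W ⟶ Y}
    (hφ : φ ≫ g = 0) : ∃ ψ : W ⟶ X, φ = ψ ≫ f :=
  Triangle.coyoneda_exact₂ _ hT φ hφ

lemma coyoneda_exact₁_mk (hT : Triangle.mk f g h ∈ distTriang D) {φ : W ⟶ X}
    (hφ : φ ≫ f = 0) : ∃ ψ : W ⟶ Z⟦(-1 : ℤ)⟧, φ = ψ ≫ invRotateMor₁ h :=
  coyoneda_exact₂_mk (inv_rot_of_distTriang_mk hT) hφ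

lemma yoneda_exact₂_mk (hT : Triangle.mk f g h ∈ distTriang D) {φ : Y ⟶ W}
    (hφ : f ≫ φ = 0) : ∃ ψ : Z ⟶ W, φ = g ≫ ψ :=
  Triangle.yoneda_exact₂ _ hT φ hφ

lemma yoneda_exact₃_mk (hT : Triangle.mk f g h ∈ distTriang D) {φ : Z ⟶ W}
    (hφ : g ≫ φ = 0) : ∃ ψ : X⟦(1 : ℤ)⟧ ⟶ W, φ = h ≫ ψ :=
  Triangle.yoneda_exact₃ _ hT φ hφ

lemma shift_comp_invRotateMor₁ (hT : Triangle.mk f g h ∈ distTriang D) :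
    g⟦(-1 : ℤ)⟧' ≫ invRotateMor₁ h = 0 := by
  change g⟦(-1 : ℤ)⟧' ≫ (-h⟦(-1 : ℤ)⟧' ≫ (shiftEquiv D (1 : ℤ)).unitIso.inv.app X) = 0
  rw [Preadditive.comp_neg, neg_eq_zero]
  refine (assoc _ _ _).symm.trans ?_
  refine (congrArg (· ≫ _) ((shiftFunctor D (-1 : ℤ)).map_comp g h).symm).trans ?_
  rw [comp_eq_zero₂₃_mk hT, Functor.map_zero]
  exact zero_comp

lemma eq_zero_of_comp_mor₁_eq_zero (hT : Triangle.mk f g h ∈ distTriang D)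
    (hW : Subsingleton (W ⟶ Z⟦(-1 : ℤ)⟧)) {φ : W ⟶ X} (hφ : φ ≫ f = 0) : φ = 0 := by
  obtain ⟨ψ, rfl⟩ := coyoneda_exact₁_mk hT hφ
  rw [hW.elim ψ 0, zero_comp]

lemma eq_zero_of_mor₂_comp_eq_zero (hT : Triangle.mk f g h ∈ distTriang D)
    (hW : Subsingleton (X⟦(1 : ℤ)⟧ ⟶ W)) {φ : Z ⟶ W} (hφ : g ≫ φ = 0) : φ = 0 := by
  obtain ⟨ψ, rfl⟩ := yoneda_exact₃_mk hT hφ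
  rw [hW.elim ψ 0, comp_zero]

lemma subsingleton_hom_from_of_distTriang (hT : Triangle.mk f g h ∈ distTriang D)
    (hX : Subsingleton (X ⟶ W)) (hZ : Subsingleton (Z ⟶ W)) : Subsingleton (Y ⟶ W) :=
  subsingleton_of_forall_eq 0 fun φ => by
    obtain ⟨ψ, rfl⟩ := yoneda_exact₂_mk hT (φ := φ) (hX.elim _ _)
    rw [hZ.elim ψ 0, comp_zero]

lemma subsingleton_hom_to_of_distTriang (hT : Triangle.mk f g h ∈ distTriang D)
    (hX : Subsingleton (W ⟶ X)) (hZ : Subsingleton (W ⟶ Z)) : Subsingleton (W ⟶ Y) :=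
  subsingleton_of_forall_eq 0 fun φ => by
    obtain ⟨ψ, rfl⟩ := coyoneda_exact₂_mk hT (φ := φ) (hZ.elim _ _)
    rw [hX.elim ψ 0, zero_comp]

lemma comp_self_eq_zero_of_mor₂_comp_eq_zero (hT : Triangle.mk f g h ∈ distTriang D)
    (hf : ∀ ψ : X ⟶ X, ψ ≫ f = 0 → ψ = 0) {φ : Z ⟶ Z} (hφ : g ≫ φ = 0) : φ ≫ φ = 0 := by
  obtain ⟨φ', rfl⟩ := yoneda_exact₃_mk hT hφ
  obtain ⟨ψ, hψ⟩ := (shiftFunctor D (1 : ℤ)).map_surjective (φ' ≫ h)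
  have hψf : ψ ≫ f = 0 := (shiftFunctor D (1 : ℤ)).map_injective (by
    rw [Functor.map_comp, hψ, assoc, comp_eq_zero₃₁_mk hT, comp_zero, Functor.map_zero])
  rw [assoc, ← assoc φ', ← hψ, hf ψ hψf, Functor.map_zero, zero_comp, comp_zero]

lemma comp_self_eq_zero_of_comp_mor₁_eq_zero (hT : Triangle.mk f g h ∈ distTriang D)
    (hg : ∀ ψ : Z ⟶ Z, g ≫ ψ = 0 → ψ = 0) {φ : X ⟶ X} (hφ : φ ≫ f = 0) : φ ≫ φ = 0 := by
  obtain ⟨φ', rfl⟩ := coyoneda_exact₁_mk hT hφ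
  obtain ⟨ψ, hψ⟩ := (shiftFunctor D (-1 : ℤ)).map_surjective (invRotateMor₁ h ≫ φ')
  have hgψ : g ≫ ψ = 0 := (shiftFunctor D (-1 : ℤ)).map_injective (by
    rw [Functor.map_comp, hψ, ← assoc, shift_comp_invRotateMor₁ hT, zero_comp, Functor.map_zero])
  rw [assoc, ← assoc (invRotateMor₁ h), ← hψ, hg ψ hgψ, Functor.map_zero, zero_comp, comp_zero]

lemma distTriang_mk_iso₁ (hT : Triangle.mk f g h ∈ distTriang D) {X' : D} (e : X' ≅ X) :
    Triangle.mk (e.hom ≫ f) g (h ≫ e.inv⟦(1 : ℤ)⟧') ∈ distTriang D :=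
  isomorphic_distinguished _ hT _ (Triangle.isoMk _ _ e (Iso.refl Y) (Iso.refl Z)
    (by simp [Triangle.mk]) (by simp [Triangle.mk]) (by simp [Triangle.mk]))

lemma distTriang_mk_iso₂ (hT : Triangle.mk f g h ∈ distTriang D) {Y' : D} (e : Y ≅ Y') :
    Triangle.mk (f ≫ e.hom) (e.inv ≫ g) h ∈ distTriang D :=
  isomorphic_distinguished _ hT _ (Triangle.isoMk _ _ (Iso.refl X) e.symm (Iso.refl Z)
    (by simp [Triangle.mk]) (by simp [Triangle.mk]) (by simp [Triangle.mk]))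

lemma distTriang_mk_iso₃ (hT : Triangle.mk f g h ∈ distTriang D) {Z' : D} (e : Z ≅ Z') :
    Triangle.mk f (g ≫ e.hom) (e.inv ≫ h) ∈ distTriang D :=
  isomorphic_distinguished _ hT _ (Triangle.isoMk _ _ (Iso.refl X) (Iso.refl Y) e.symm
    (by simp [Triangle.mk]) (by simp [Triangle.mk]) (by simp [Triangle.mk]))

lemma distTriang_mk_of_mor₂_retract (hT : Triangle.mk f g h ∈ distTriang D)
    (hf : ∀ ψ : X ⟶ X, ψ ≫ f = 0 → ψ = 0) (ρ : Y ⟶ W) (u : W ⟶ Z) (v : Z ⟶ W)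
    (hv : g ≫ v = ρ) (hu : ρ ≫ u = g) (huv : u ≫ v = 𝟙 W) :
    Triangle.mk f ρ (u ≫ h) ∈ distTriang D := by
  have hvu : v ≫ u = 𝟙 Z := by
    refine eq_id_of_comp_self_of_sub_id_sq_eq_zero (by rw [assoc, reassoc_of% huv]) ?_
    refine comp_self_eq_zero_of_mor₂_comp_eq_zero hT hf ?_
    rw [Preadditive.comp_sub, reassoc_of% hv, hu, comp_id, sub_self]
  simpa [hv] using distTriang_mk_iso₃ hT ⟨v, u, hvu, huv⟩

lemma distTriang_mk_of_mor₁_retract (hT : Triangle.mk f g h ∈ distTriang D)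
    (hg : ∀ ψ : Z ⟶ Z, g ≫ ψ = 0 → ψ = 0) (κ : W ⟶ Y) (θ : W ⟶ X) (ϑ : X ⟶ W)
    (hθ : θ ≫ f = κ) (hϑ : ϑ ≫ κ = f) (hθϑ : θ ≫ ϑ = 𝟙 W) :
    Triangle.mk κ g (h ≫ ϑ⟦(1 : ℤ)⟧') ∈ distTriang D := by
  have hϑθ : ϑ ≫ θ = 𝟙 X := by
    refine eq_id_of_comp_self_of_sub_id_sq_eq_zero (by rw [assoc, reassoc_of% hθϑ]) ?_
    refine comp_self_eq_zero_of_comp_mor₁_eq_zero hT hg ?_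
    rw [Preadditive.sub_comp, assoc, hθ, hϑ, id_comp, sub_self]
  simpa [hθ] using distTriang_mk_iso₁ hT ⟨θ, ϑ, hθϑ, hϑθ⟩

-- A converse to the octahedral axiom for `p ≫ q`, with fibres `K` of `p` and `L` of `q`.
theorem exists_distTriang_comp_of_fiber_extension {K A B L B' E : D}
    {i : K ⟶ A} {p : A ⟶ B} {δ : B ⟶ K⟦(1 : ℤ)⟧} (hK : Triangle.mk i p δ ∈ distTriang D)
    {j : L ⟶ B} {q : B ⟶ B'} {ε : B' ⟶ L⟦(1 : ℤ)⟧} (hL : Triangle.mk j q ε ∈ distTriang D)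
    {a : K ⟶ E} {b : E ⟶ L} (hE : Triangle.mk a b (j ≫ δ) ∈ distTriang D)
    (hEB : Subsingleton (E ⟶ B⟦(-1 : ℤ)⟧)) (hEB' : Subsingleton (E ⟶ B'⟦(-1 : ℤ)⟧))
    (hLB' : Subsingleton (L⟦(1 : ℤ)⟧ ⟶ B')) (hEB'₁ : Subsingleton (E⟦(1 : ℤ)⟧ ⟶ B')) :
    ∃ (ι : E ⟶ A) (δ' : B' ⟶ E⟦(1 : ℤ)⟧), Triangle.mk ι (p ≫ q) δ' ∈ distTriang D := by
  obtain ⟨ι, hι₁, hι₂⟩ : ∃ ι : E ⟶ A, a ≫ ι = i ∧ b ≫ j = ι ≫ p := by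
    obtain ⟨ι, h₁, h₂⟩ := complete_distinguished_triangle_morphism₂ _ _ hE hK (𝟙 K) j
      (by simp [Triangle.mk])
    exact ⟨ι, h₁.trans (id_comp i), h₂⟩
  obtain ⟨N, r, δN, hN⟩ := distinguished_cocone_triangle ι
  have hιr : ι ≫ r = 0 := comp_eq_zero₁₂_mk hN
  obtain ⟨u, hu⟩ : ∃ u : B' ⟶ N, (p ≫ q) ≫ u = r := by
    obtain ⟨r₁, hr₁⟩ := yoneda_exact₂_mk hK (φ := r) (by rw [← hι₁, assoc, hιr, comp_zero])
    obtain ⟨r₂, hr₂⟩ := yoneda_exact₃_mk hE (φ := j ≫ r₁)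
      (by rw [reassoc_of% hι₂, ← hr₁, hιr])
    obtain ⟨u, hu⟩ := yoneda_exact₂_mk hL (φ := r₁ - δ ≫ r₂)
      (by rw [Preadditive.comp_sub, hr₂, assoc, sub_self])
    refine ⟨u, ?_⟩
    rw [assoc, ← hu, Preadditive.comp_sub, ← hr₁, reassoc_of% (comp_eq_zero₂₃_mk hK), zero_comp,
      sub_zero]
  obtain ⟨v, hv⟩ := yoneda_exact₂_mk hN (φ := p ≫ q)
    (by rw [← assoc, ← hι₂, assoc, comp_eq_zero₁₂_mk hL, comp_zero])
  refine ⟨ι, u ≫ δN, distTriang_mk_of_mor₂_retract hN ?_ (p ≫ q) u v hv.symm hu ?_⟩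
  · intro ψ hψ
    have hψb : ψ ≫ b = 0 := eq_zero_of_comp_mor₁_eq_zero hL hEB'
      (by rw [assoc, hι₂, reassoc_of% hψ, zero_comp])
    obtain ⟨ξ, rfl⟩ := coyoneda_exact₂_mk hE hψb
    rw [eq_zero_of_comp_mor₁_eq_zero hK hEB (φ := ξ) (by rw [← hι₁, ← assoc, hψ]), zero_comp]
  · have hq : q ≫ u ≫ v = q := by
      obtain ⟨g, hg⟩ := yoneda_exact₃_mk hK (φ := q ≫ u ≫ v - q)
        (by simp only [Preadditive.comp_sub, ← assoc, hu, ← hv, sub_self])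
      have hg₀ : g = 0 := eq_zero_of_mor₂_comp_eq_zero (rot_of_distTriang_mk hE) hEB'₁
        (by rw [assoc, ← hg, Preadditive.comp_sub, reassoc_of% (comp_eq_zero₁₂_mk hL),
          comp_eq_zero₁₂_mk hL, zero_comp, sub_self])
      rw [← sub_eq_zero, hg, hg₀, comp_zero]
    exact sub_eq_zero.mp (eq_zero_of_mor₂_comp_eq_zero hL hLB'
      (by rw [Preadditive.comp_sub, hq, comp_id, sub_self]))

-- The dual statement for `i ≫ k`, with cones `M` of `i` and `Q` of `k`.
theorem exists_distTriang_comp_of_cone_extension {X Y A M Q E : D}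
    {i : X ⟶ Y} {c : Y ⟶ M} {γ : M ⟶ X⟦(1 : ℤ)⟧} (hM : Triangle.mk i c γ ∈ distTriang D)
    {k : Y ⟶ A} {d : A ⟶ Q} {ε : Q ⟶ Y⟦(1 : ℤ)⟧} (hQ : Triangle.mk k d ε ∈ distTriang D)
    {a : M ⟶ E} {b : E ⟶ Q} (hE : Triangle.mk a b (ε ≫ c⟦(1 : ℤ)⟧') ∈ distTriang D)
    (hXQ : Subsingleton (X ⟶ Q⟦(-1 : ℤ)⟧)) (hXM : Subsingleton (X ⟶ M⟦(-1 : ℤ)⟧))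
    (hXE : Subsingleton (X⟦(1 : ℤ)⟧ ⟶ E)) (hYE : Subsingleton (Y⟦(1 : ℤ)⟧ ⟶ E)) :
    ∃ (κ : A ⟶ E) (δ : E ⟶ X⟦(1 : ℤ)⟧), k ≫ κ = c ≫ a ∧ κ ≫ b = d ∧
      Triangle.mk (i ≫ k) κ δ ∈ distTriang D := by
  obtain ⟨κ, hκ₁, hκ₂⟩ : ∃ κ : A ⟶ E, k ≫ κ = c ≫ a ∧ d = κ ≫ b := by
    obtain ⟨κ, h₁, h₂⟩ := complete_distinguished_triangle_morphism₂ _ _ hQ hE c (𝟙 Q)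
      (by simp [Triangle.mk])
    exact ⟨κ, h₁, (comp_id d).symm.trans h₂⟩
  obtain ⟨F, l, δF, hF⟩ := distinguished_cocone_triangle₁ κ
  have hlκ : l ≫ κ = 0 := comp_eq_zero₁₂_mk hF
  obtain ⟨θ, hθ⟩ := coyoneda_exact₂_mk hF (φ := i ≫ k)
    (by rw [assoc, hκ₁, reassoc_of% (comp_eq_zero₁₂_mk hM), zero_comp])
  obtain ⟨y, hyk, hyc⟩ : ∃ y : F ⟶ Y, y ≫ k = l ∧ y ≫ c = 0 := by
    obtain ⟨y₁, hy₁⟩ := coyoneda_exact₂_mk hQ (φ := l) (by rw [hκ₂, reassoc_of% hlκ, zero_comp])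
    obtain ⟨ζ, hζ⟩ := coyoneda_exact₁_mk hE (φ := y₁ ≫ c)
      (by rw [assoc, ← hκ₁, ← assoc, ← hy₁, hlκ])
    refine ⟨y₁ - ζ ≫ invRotateMor₁ ε, ?_, ?_⟩
    · rw [Preadditive.sub_comp, ← hy₁, assoc, comp_eq_zero₁₂_mk (inv_rot_of_distTriang_mk hQ),
        comp_zero, sub_zero]
    · rw [Preadditive.sub_comp, hζ, assoc, invRotateMor₁_comp, sub_self]
  obtain ⟨ϑ, hϑ⟩ := coyoneda_exact₂_mk hM hyc
  have hθy : θ ≫ y = i := sub_eq_zero.mp (eq_zero_of_comp_mor₁_eq_zero hQ hXQ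
    (by rw [Preadditive.sub_comp, assoc, hyk, ← hθ, sub_self]))
  refine ⟨κ, δF ≫ ϑ⟦(1 : ℤ)⟧', hκ₁, hκ₂.symm,
    distTriang_mk_of_mor₁_retract hF ?_ (i ≫ k) θ ϑ hθ.symm ?_ ?_⟩
  · intro ψ hψ
    have haψ : a ≫ ψ = 0 := eq_zero_of_mor₂_comp_eq_zero hM hXE
      (by rw [← assoc, ← hκ₁, assoc, hψ, comp_zero])
    obtain ⟨ψ', rfl⟩ := yoneda_exact₂_mk hE haψ
    rw [eq_zero_of_mor₂_comp_eq_zero hQ hYE (φ := ψ') (by rw [hκ₂, assoc, hψ]), comp_zero]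
  · rw [← assoc, ← hϑ, hyk]
  · exact sub_eq_zero.mp (eq_zero_of_comp_mor₁_eq_zero hM hXM
      (by rw [Preadditive.sub_comp, assoc, ← hϑ, hθy, id_comp, sub_self]))

def HasFiberIn (P : D → Prop) {x y : D} (α : x ⟶ y) : Prop :=
  ∃ (F : D) (f : F ⟶ x) (h : y ⟶ F⟦(1 : ℤ)⟧), P F ∧ Triangle.mk f α h ∈ distTriang D

def HasDeflationMonoFactorization (P : D → Prop) {a0 a1 : D} (α : a0 ⟶ a1) : Prop :=
  ∃ (z a : D) (f : z ⟶ a0) (σ : a0 ⟶ a) (h : a ⟶ z⟦(1 : ℤ)⟧) (ι : a ⟶ a1),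
    P z ∧ P a ∧ Triangle.mk f σ h ∈ distTriang D ∧ σ ≫ ι = α ∧ IsMonoOn P ι

lemma IsMonoOn.of_distTriang {P : D → Prop} {M E Q Y₁ Y Y₂ : D}
    {a : M ⟶ E} {b : E ⟶ Q} {δ : Q ⟶ M⟦(1 : ℤ)⟧} (hE : Triangle.mk a b δ ∈ distTriang D)
    {g₁ : Y₁ ⟶ Y} {g₂ : Y ⟶ Y₂} {ε : Y₂ ⟶ Y₁⟦(1 : ℤ)⟧} (hY : Triangle.mk g₁ g₂ ε ∈ distTriang D)
    {ι₁ : M ⟶ Y₁} {ι : E ⟶ Y} {ι₂ : Q ⟶ Y₂} (h₁ : a ≫ ι = ι₁ ≫ g₁) (h₂ : ι ≫ g₂ = b ≫ ι₂)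
    (hι₁ : IsMonoOn P ι₁) (hι₂ : IsMonoOn P ι₂)
    (hP : ∀ x, P x → Subsingleton (x ⟶ Y₂⟦(-1 : ℤ)⟧)) : IsMonoOn P ι := by
  intro x hx u hu
  obtain ⟨w, rfl⟩ := coyoneda_exact₂_mk hE
    (hι₂ x hx (u ≫ b) (by rw [assoc, ← h₂, reassoc_of% hu, zero_comp]))
  have hw : w ≫ ι₁ = 0 :=
    eq_zero_of_comp_mor₁_eq_zero hY (hP x hx) (by rw [assoc, ← h₁, ← assoc, hu])
  rw [hι₁ x hx w hw, zero_comp]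

lemma HasDeflationMonoFactorization.zero {P : D → Prop} {a0 : D} (h0 : P a0) (hP : P 0)
    (a1 : D) : HasDeflationMonoFactorization P (0 : a0 ⟶ a1) :=
  ⟨a0, 0, 𝟙 a0, 0, 0, 0, h0, hP, contractible_distinguished a0, zero_comp,
    fun _ _ u _ => (isZero_zero D).eq_of_tgt u 0⟩

lemma HasDeflationMonoFactorization.comp_iso {P : D → Prop} {a0 a1 a1' : D} {α : a0 ⟶ a1}
    (hα : HasDeflationMonoFactorization P α) (e : a1 ≅ a1') :
    HasDeflationMonoFactorization P (α ≫ e.hom) := by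
  obtain ⟨z, a, f, σ, h, ι, hz, ha, hT, rfl, hι⟩ := hα
  exact ⟨z, a, f, σ, h, ι ≫ e.hom, hz, ha, hT, (assoc _ _ _).symm,
    fun b hb u hu => hι b hb u ((cancel_mono e.hom).mp (by rw [assoc, hu, zero_comp]))⟩

end Pretriangulated

namespace ExtClos

variable {S : Set C}

lemma subsingleton_hom_from {X : C} (hS : ∀ s ∈ S, Subsingleton (s ⟶ X)) {b : C}
    (hb : ExtClos S b) : Subsingleton (b ⟶ X) := by
  induction hb with
  | of hs => exact hS _ hs
  | zero hz => exact ⟨hz.eq_of_src⟩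
  | sum _ _ ihx ihy =>
    exact subsingleton_hom_from_of_distTriang (binaryBiproductTriangle_distinguished _ _) ihx ihy
  | iso e _ ih => exact ⟨fun φ ψ => (cancel_epi e.hom).mp (ih.elim _ _)⟩
  | ext _ _ hT _ _ iha ihb => exact subsingleton_hom_from_of_distTriang hT.choose_spec iha ihb

lemma subsingleton_hom_to {X : C} (hS : ∀ s ∈ S, Subsingleton (X ⟶ s)) {b : C}
    (hb : ExtClos S b) : Subsingleton (X ⟶ b) := by
  induction hb with
  | of hs => exact hS _ hs
  | zero hz => exact ⟨hz.eq_of_tgt⟩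
  | sum _ _ ihx ihy =>
    exact subsingleton_hom_to_of_distTriang (binaryBiproductTriangle_distinguished _ _) ihx ihy
  | iso e _ ih => exact ⟨fun φ ψ => (cancel_mono e.inv).mp (ih.elim _ _)⟩
  | ext _ _ hT _ _ iha ihb => exact subsingleton_hom_to_of_distTriang hT.choose_spec iha ihb

end ExtClos

namespace IsOrthogonalCollection

variable {S : Set C}

lemma subsingleton_hom_shift (hS : IsOrthogonalCollection 2 S) {x y : C} (hx : ExtClos S x)
    (hy : ExtClos S y) : Subsingleton (x ⟶ y⟦(-1 : ℤ)⟧) := by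
  refine ExtClos.subsingleton_hom_from (fun s hs => ?_) hx
  refine (subsingleton_shift_hom_iff s y).mp (ExtClos.subsingleton_hom_to (fun t ht => ?_) hy)
  exact (subsingleton_shift_hom_iff s t).mpr (subsingleton_of_forall_eq 0
    (hS.shift_hom_eq_zero s hs t ht (-1) (by norm_num) le_rfl))

lemma subsingleton_shift_hom (hS : IsOrthogonalCollection 2 S) {x y : C} (hx : ExtClos S x)
    (hy : ExtClos S y) : Subsingleton (x⟦(1 : ℤ)⟧ ⟶ y) :=
  (subsingleton_shift_hom_iff x y).mpr (hS.subsingleton_hom_shift hx hy)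

lemma hasFiberIn_of_distTriang (hS : IsOrthogonalCollection 2 S) {s : C} (hs : s ∈ S)
    {A' A A'' : C} {f : A' ⟶ A} {g : A ⟶ A''} {h : A'' ⟶ A'⟦(1 : ℤ)⟧}
    (hT : Triangle.mk f g h ∈ distTriang C) (h' : ExtClos S A') (h'' : ExtClos S A'')
    (ih' : ∀ β : A' ⟶ s, β ≠ 0 → HasFiberIn (ExtClos S) β)
    (ih'' : ∀ β : A'' ⟶ s, β ≠ 0 → HasFiberIn (ExtClos S) β) (α : A ⟶ s) (hα : α ≠ 0) :
    HasFiberIn (ExtClos S) α := by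
  have h0 : ExtClos S A := ExtClos.ext f g ⟨h, hT⟩ h' h''
  have hs' : ExtClos S s := ExtClos.of hs
  by_cases hfα : f ≫ α = 0
  -- `α` factors through `A''`: its fibre is an extension of the fibre of the factor by `A'`
  · obtain ⟨α'', rfl⟩ := yoneda_exact₂_mk hT hfα
    obtain ⟨F, k, δ, hF, hTF⟩ := ih'' α'' (by rintro rfl; exact hα comp_zero)
    obtain ⟨E, a, b, hE⟩ := distinguished_cocone_triangle₂ (k ≫ h)
    have hE' : ExtClos S E := ExtClos.ext a b ⟨_, hE⟩ h' hF
    obtain ⟨ι, δ', hι⟩ := exists_distTriang_comp_of_fiber_extension hT hTF hE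
      (hS.subsingleton_hom_shift hE' h'') (hS.subsingleton_hom_shift hE' hs')
      (hS.subsingleton_shift_hom hF hs') (hS.subsingleton_shift_hom hE' hs')
    exact ⟨E, ι, δ', hE', hι⟩
  -- otherwise the fibre of `α` is an extension of `A''` by the fibre of `f ≫ α`
  · obtain ⟨F, k, δ, hF, hTF⟩ := ih' (f ≫ α) hfα
    obtain ⟨K, l, ε, hK⟩ := distinguished_cocone_triangle₁ α
    -- named with its expected type, so that `rw` can reassociate past it
    set u : s ⟶ (s⟦(-1 : ℤ)⟧)⟦(1 : ℤ)⟧ := (shiftEquiv C (1 : ℤ)).counitIso.inv.app s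
    have hE : Triangle.mk (invRotateMor₁ δ) k (f ≫ α ≫ u) ∈ distTriang C := by
      rw [← assoc]
      exact inv_rot_of_distTriang_mk hTF
    obtain ⟨ι, δ', hι⟩ := exists_distTriang_comp_of_fiber_extension
      (inv_rot_of_distTriang_mk hK) hT hE
      (hS.subsingleton_hom_shift hF h0) (hS.subsingleton_hom_shift hF h'')
      (hS.subsingleton_shift_hom h' h'') (hS.subsingleton_shift_hom hF h'')
    exact ⟨K, l, ε, ExtClos.ext ι (l ≫ g) ⟨δ', hι⟩ hF h'', hK⟩

lemma hasFiberIn_of_ne_zero (hS : IsOrthogonalCollection 2 S) {s : C} (hs : s ∈ S) {a : C}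
    (ha : ExtClos S a) : ∀ α : a ⟶ s, α ≠ 0 → HasFiberIn (ExtClos S) α := by
  induction ha with
  | @of t ht =>
    intro α hα
    obtain rfl : t = s := by_contra fun hts => hα (hS.hom_eq_zero t ht s hs hts α)
    have := hS.isIso_of_ne_zero t ht α hα
    exact ⟨0, 0, 0, ExtClos.zero (isZero_zero C),
      by simpa using distTriang_mk_iso₃ (contractible_distinguished₁ t) (asIso α)⟩
  | zero hz => exact fun α hα => (hα (hz.eq_of_src α 0)).elim
  | sum hx hy ihx ihy =>
    exact hS.hasFiberIn_of_distTriang hs (binaryBiproductTriangle_distinguished _ _) hx hy ihx ihy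
  | iso e _ ih =>
    intro α hα
    obtain ⟨F, f, h, hF, hT⟩ := ih (e.hom ≫ α) (fun h0 => hα (by simpa using e.inv ≫= h0))
    exact ⟨F, f ≫ e.hom, h, hF, by simpa using distTriang_mk_iso₂ hT e⟩
  | ext _ _ hT ha hb iha ihb => exact hS.hasFiberIn_of_distTriang hs hT.choose_spec ha hb iha ihb

lemma hasDeflationMonoFactorization_of_distTriang (hS : IsOrthogonalCollection 2 S)
    {Y₁ Y Y₂ : C} {g₁ : Y₁ ⟶ Y} {g₂ : Y ⟶ Y₂} {ε : Y₂ ⟶ Y₁⟦(1 : ℤ)⟧}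
    (hY : Triangle.mk g₁ g₂ ε ∈ distTriang C) (hY₁ : ExtClos S Y₁) (hY₂ : ExtClos S Y₂)
    (ih₁ : ∀ {a0}, ExtClos S a0 → ∀ α : a0 ⟶ Y₁, HasDeflationMonoFactorization (ExtClos S) α)
    (ih₂ : ∀ {a0}, ExtClos S a0 → ∀ α : a0 ⟶ Y₂, HasDeflationMonoFactorization (ExtClos S) α)
    {a0 : C} (h0 : ExtClos S a0) (α : a0 ⟶ Y) :
    HasDeflationMonoFactorization (ExtClos S) α := by
  obtain ⟨z₂, a₂, f₂, σ₂, h₂, ι₂, hz₂, ha₂, hT₂, hσι₂, hι₂⟩ := ih₂ h0 (α ≫ g₂)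
  obtain ⟨β, hβ⟩ := coyoneda_exact₂_mk hY (φ := f₂ ≫ α)
    (by rw [assoc, ← hσι₂, reassoc_of% (comp_eq_zero₁₂_mk hT₂), zero_comp])
  obtain ⟨z₁, m₁, f₁, σ₁, h₁, ι₁, hz₁, hm₁, hT₁, hσι₁, hι₁⟩ := ih₁ hz₂ β
  obtain ⟨E, a, b, hE⟩ := distinguished_cocone_triangle₂ (h₂ ≫ σ₁⟦(1 : ℤ)⟧')
  have hE' : ExtClos S E := ExtClos.ext a b ⟨_, hE⟩ hm₁ ha₂
  obtain ⟨κ, δ, hκ₁, hκ₂, hκ⟩ := exists_distTriang_comp_of_cone_extension hT₁ hT₂ hE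
    (hS.subsingleton_hom_shift hz₁ ha₂) (hS.subsingleton_hom_shift hz₁ hm₁)
    (hS.subsingleton_shift_hom hz₁ hE') (hS.subsingleton_shift_hom hz₂ hE')
  obtain ⟨ι, hι⟩ := yoneda_exact₂_mk hκ (φ := α)
    (by rw [assoc, hβ, ← hσι₁, ← assoc, reassoc_of% (comp_eq_zero₁₂_mk hT₁), zero_comp, zero_comp])
  refine ⟨z₁, E, f₁ ≫ f₂, κ, δ, ι, hz₁, hE', hκ, hι.symm,
    IsMonoOn.of_distTriang hE hY ?_ ?_ hι₁ hι₂ fun x hx => hS.subsingleton_hom_shift hx hY₂⟩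
  · refine sub_eq_zero.mp (eq_zero_of_mor₂_comp_eq_zero hT₁
      (hS.subsingleton_shift_hom hz₁ (ExtClos.ext g₁ g₂ ⟨ε, hY⟩ hY₁ hY₂)) ?_)
    rw [Preadditive.comp_sub, ← reassoc_of% hκ₁, ← hι, reassoc_of% hσι₁, ← hβ, sub_self]
  · refine sub_eq_zero.mp (eq_zero_of_mor₂_comp_eq_zero hκ (hS.subsingleton_shift_hom hz₁ hY₂) ?_)
    rw [Preadditive.comp_sub, ← reassoc_of% hι, reassoc_of% hκ₂, hσι₂, sub_self]

lemma hasDeflationMonoFactorization (hS : IsOrthogonalCollection 2 S) {a1 : C} (h1 : ExtClos S a1) :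
    ∀ {a0 : C}, ExtClos S a0 → ∀ α : a0 ⟶ a1, HasDeflationMonoFactorization (ExtClos S) α := by
  induction h1 with
  | of hs =>
    intro a0 h0 α
    by_cases hα : α = 0
    · rw [hα]
      exact .zero h0 (ExtClos.zero (isZero_zero C)) _
    · obtain ⟨F, f, h, hF, hT⟩ := hS.hasFiberIn_of_ne_zero hs h0 α hα
      exact ⟨F, _, f, α, h, 𝟙 _, hF, .of hs, hT, comp_id α, fun _ _ u hu => by simpa using hu⟩
  | zero hz =>
    intro a0 h0 α
    rw [hz.eq_of_tgt α 0]
    exact .zero h0 (ExtClos.zero (isZero_zero C)) _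
  | iso e _ ih => exact fun h0 α => by simpa using (ih h0 (α ≫ e.inv)).comp_iso e
  | sum hx hy ihx ihy =>
    exact hS.hasDeflationMonoFactorization_of_distTriang
      (binaryBiproductTriangle_distinguished _ _) hx hy ihx ihy
  | ext _ _ hT ha hb iha ihb =>
    exact hS.hasDeflationMonoFactorization_of_distTriang hT.choose_spec ha hb iha ihb

end IsOrthogonalCollection

/-- Let `S` be a `2`-orthogonal collection in `C`.  Every morphism
`α : a⁰ ⟶ a¹` in `⟨S⟩` factorises as `a⁰ ⟶ a ⟶ a¹` in `⟨S⟩` where the first map is a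
deflation and the second is a categorical monomorphism in `⟨S⟩`. -/
theorem statement9 {k : Type} [Field k] [Linear k C]
    [EssentiallySmall.{v} C] [IsIdempotentComplete C]
    [∀ x y : C, FiniteDimensional k (x ⟶ y)]
    (S : Set C) (hS : IsOrthogonalCollection 2 S)
    {a0 a1 : C} (h0 : ExtClos S a0) (h1 : ExtClos S a1) (α : a0 ⟶ a1) :
    ∃ (a : C) (_ : ExtClos S a) (σ : a0 ⟶ a) (ι : a ⟶ a1),
      σ ≫ ι = α ∧
      -- `σ` is a deflation: the second map of a short triangle in `⟨S⟩`
      (∃ (x : C) (_ : ExtClos S x) (f : x ⟶ a0), ShortTri f σ) ∧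
      -- `ι` is a categorical monomorphism in `⟨S⟩`
      (∀ b : C, ExtClos S b → Function.Injective (fun u : b ⟶ a => u ≫ ι)) := by
  obtain ⟨z, a, f, σ, h, ι, hz, ha, hT, hσι, hι⟩ := hS.hasDeflationMonoFactorization h1 h0 α
  refine ⟨a, ha, σ, ι, hσι, ⟨z, hz, f, h, hT⟩, fun b hb u v huv => ?_⟩
  exact sub_eq_zero.mp (hι b hb (u - v) (by rw [Preadditive.sub_comp, sub_eq_zero]; exact huv))
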